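/- arXiv:2507.04714 — 6 statements merged into one kernel-verified Lean document; each statement's English description precedes it below -/
import Mathlib

section
/- If v is a balky vertex of a tree T (i.e., exactly (deg_T(v)-1)/2 of its neighbours are leaves), u is a non-leaf neighbour of v, and at some time s ≥ 0 in majority dynamics we have ξ_s(v) = ξ_{s+1}(u), then ξ_{s+2}(v) = ξ_s(v). -/
open SimpleGraph Set

variable {V : Type*}

/-- The majority-dynamics process generated by the initial opinion vector `σ`:
`ξ (t+1) v` is the sign of the sum of the opinions `ξ t` over the neighbours of `v`. -/
noncomputable def dyn (G : SimpleGraph V) (σ : V → ℤ) : ℕ → V → ℤ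
  | 0 => σ
  | t + 1 => fun v => if 0 < ∑ᶠ u ∈ G.neighborSet v, dyn G σ t u then 1 else -1

/-- `σ` is a valid vector of opinions, i.e. takes values in `{-1, 1}`. -/
def PM (σ : V → ℤ) : Prop := ∀ v, σ v = 1 ∨ σ v = -1

/-- The degree of a vertex. -/
noncomputable def degree' (G : SimpleGraph V) (v : V) : ℕ := (G.neighborSet v).ncard

/-- A leaf is a vertex of degree 1. -/
def IsLeaf (G : SimpleGraph V) (v : V) : Prop := degree' G v = 1

/-- The number of neighbours of `v` that are leaves. -/
noncomputable def leafNbrs (G : SimpleGraph V) (v : V) : ℕ := {u | G.Adj v u ∧ IsLeaf G u}.ncard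

/-- All degrees of `G` are odd. -/
def OddDegrees (G : SimpleGraph V) : Prop := ∀ v, Odd (degree' G v)

/-- `v` is `t`-stable for the process `ξ`. -/
def Stable (ξ : ℕ → V → ℤ) (v : V) (t : ℕ) : Prop :=
  ∀ s, t ≤ s → s % 2 = t % 2 → ξ (s + 2) v = ξ s v

lemma dyn_succ (G : SimpleGraph V) (σ : V → ℤ) (t : ℕ) (w : V) :
    dyn G σ (t + 1) w = if 0 < ∑ᶠ u ∈ G.neighborSet w, dyn G σ t u then 1 else -1 := rfl

lemma dyn_pm (G : SimpleGraph V) (σ : V → ℤ) (hσ : PM σ) (t : ℕ) : PM (dyn G σ t) := by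
  induction t with
  | zero => exact hσ
  | succ t ih => intro w; rw [dyn_succ]; split <;> simp

lemma leaf_nbr (G : SimpleGraph V) {w v : V} (hl : IsLeaf G w) (ha : G.Adj w v) :
    G.neighborSet w = {v} := by
  obtain ⟨a, hw⟩ := Set.ncard_eq_one.1 hl
  have : v ∈ ({a} : Set V) := hw ▸ ha
  simp at this
  rw [hw, this]

lemma dyn_leaf (G : SimpleGraph V) (σ : V → ℤ) (hσ : PM σ) {w v : V}
    (hl : IsLeaf G w) (ha : G.Adj w v) (t : ℕ) :
    dyn G σ (t + 1) w = dyn G σ t v := by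
  rw [dyn_succ, leaf_nbr G hl ha, finsum_mem_singleton]
  rcases dyn_pm G σ hσ t v with h | h <;> rw [h] <;> norm_num


/-- If `v` is a balky vertex of a tree `T` (exactly `(deg v - 1)/2` of its
neighbours are leaves), `u` is a non-leaf neighbour of `v`, and `ξ_s(v) = ξ_{s+1}(u)`
at some time `s`, then `ξ_{s+2}(v) = ξ_s(v)`. -/
theorem balky_property [Fintype V] (G : SimpleGraph V) (hT : G.IsTree)
    (hodd : OddDegrees G) (v u : V)
    (hbalky : 2 * leafNbrs G v = degree' G v - 1)
    (hadj : G.Adj v u) (hu : ¬ IsLeaf G u)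
    (σ : V → ℤ) (hσ : PM σ) (s : ℕ)
    (h : dyn G σ s v = dyn G σ (s + 1) u) :
    dyn G σ (s + 2) v = dyn G σ s v := by
  classical
  set ε := dyn G σ s v with hε
  have hεpm : ε = 1 ∨ ε = -1 := dyn_pm G σ hσ s v
  have hfin : (G.neighborSet v).Finite := Set.toFinite _
  set F : Finset V := hfin.toFinset with hF
  have hcoe : ∀ w, w ∈ F ↔ G.Adj v w := by
    intro w; simp [hF, Set.Finite.mem_toFinset, mem_neighborSet]
  set LF : Finset V := F.filter (fun w => IsLeaf G w) with hLF
  have hLcard : LF.card = leafNbrs G v := by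
    rw [leafNbrs, Set.ncard_eq_toFinset_card _ (Set.toFinite _)]
    congr 1
    ext w
    simp [hLF, hcoe w]
  have hFcard : F.card = degree' G v := by
    rw [degree', Set.ncard_eq_toFinset_card _ hfin]
  have huF : u ∈ F := (hcoe u).2 hadj
  set NL : Finset V := F.filter (fun w => ¬ IsLeaf G w) with hNL
  have huNL : u ∈ NL := by simp [hNL, huF, hu]
  set x : V → ℤ := dyn G σ (s + 1) with hx
  have hxpm : ∀ w, x w = 1 ∨ x w = -1 := dyn_pm G σ hσ (s+1)
  have hS : dyn G σ (s + 2) v = if 0 < ∑ w ∈ F, x w then (1:ℤ) else -1 := by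
    rw [show s + 2 = (s+1) + 1 from rfl, dyn_succ,
      finsum_mem_eq_finite_toFinset_sum _ hfin]
  -- key bound : ε * ∑ ≥ 1
  have hee : ε * ε = 1 := by rcases hεpm with h1 | h1 <;> rw [h1] <;> norm_num
  have hL : ∑ w ∈ LF, ε * x w = LF.card := by
    rw [Finset.sum_congr rfl (fun w hw => ?_), Finset.sum_const, nsmul_eq_mul, mul_one]
    simp only [hLF, Finset.mem_filter] at hw
    rw [hx, dyn_leaf G σ hσ hw.2 (((hcoe w).1 hw.1).symm), ← hε, hee]
  have hcards : LF.card + NL.card = F.card := Finset.card_filter_add_card_filter_not _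
  have hdeg1 : 1 ≤ F.card := Finset.card_pos.2 ⟨u, huF⟩
  have hbal : 2 * LF.card + 1 = F.card := by
    rw [hLcard, hFcard]; omega
  have hNLbound : ∑ w ∈ NL.erase u, ε * x w ≥ -(NL.card - 1 : ℤ) := by
    have : ∀ w ∈ NL.erase u, (-1 : ℤ) ≤ ε * x w := by
      intro w _
      rcases hεpm with h1 | h1 <;> rcases hxpm w with h2 | h2 <;> rw [h1, h2] <;> norm_num
    calc ∑ w ∈ NL.erase u, ε * x w ≥ ∑ w ∈ NL.erase u, (-1 : ℤ) :=
          Finset.sum_le_sum this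
      _ = -(NL.erase u).card := by rw [Finset.sum_const]; push_cast; ring
      _ = -(NL.card - 1 : ℤ) := by
          rw [Finset.card_erase_of_mem huNL]
          have : 1 ≤ NL.card := Finset.card_pos.2 ⟨u, huNL⟩
          push_cast [this]
          ring
  have hNLu : ∑ w ∈ NL, ε * x w = ε * x u + ∑ w ∈ NL.erase u, ε * x w :=
    (Finset.add_sum_erase _ _ huNL).symm
  have hsplit : ∑ w ∈ F, ε * x w = ∑ w ∈ LF, ε * x w + ∑ w ∈ NL, ε * x w :=
    (Finset.sum_filter_add_sum_filter_not F _ _).symm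
  have hkey : 1 ≤ ε * ∑ w ∈ F, x w := by
    rw [Finset.mul_sum, hsplit, hNLu, hL, ← h, hee]
    have hc : (NL.card : ℤ) = LF.card + 1 := by
      have : NL.card = LF.card + 1 := by omega
      exact_mod_cast this
    linarith [hNLbound]
  rcases hεpm with h1 | h1
  · rw [h1, one_mul] at hkey
    rw [hS, if_pos (by linarith), h1]
  · rw [h1] at hkey
    rw [hS, if_neg (by push_neg; linarith), h1]
end

section
/- Every passive vertex of a tree with odd degrees is 0-stationary under majority dynamics, i.e., ξ_{t+2}(v) = ξ_t(v) for all t ≥ 0; here v is passive if strictly more than (deg_T(v)-1)/2 of its neighbours are leaves. -/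
/-!
Every leaf neighbour of `v` copies at time `t + 1` the opinion of `v` at time `t`. Since `v` is
passive and has odd degree, these leaves form a strict majority of its neighbourhood, so at time
`t + 2` the vertex `v` returns to its opinion at time `t`.
-/

open SimpleGraph Set

variable {V : Type*}

open Finset

theorem PM.dyn {σ : V → ℤ} (hσ : PM σ) (G : SimpleGraph V) : ∀ t, PM (dyn G σ t)
  | 0 => hσ
  | t + 1 => fun u => by unfold _root_.dyn; split <;> simp

theorem PM.abs_le_one {σ : V → ℤ} (hσ : PM σ) (u : V) : |σ u| ≤ 1 := by
  rcases hσ u with h | h <;> simp [h]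

theorem dyn_succ_eq_ite_sum (G : SimpleGraph V) [G.LocallyFinite] (σ : V → ℤ) (t : ℕ) (v : V) :
    dyn G σ (t + 1) v = if 0 < ∑ u ∈ G.neighborFinset v, dyn G σ t u then 1 else -1 := by
  rw [dyn, ← finsum_mem_coe_finset, coe_neighborFinset]

theorem neighborSet_eq_singleton_of_isLeaf (G : SimpleGraph V) {u v : V} (hu : IsLeaf G u)
    (huv : G.Adj v u) : G.neighborSet u = {v} := by
  obtain ⟨w, hw⟩ := Set.ncard_eq_one.mp hu
  have hv : v ∈ G.neighborSet u := huv.symm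
  rw [hw] at hv ⊢
  rw [Set.mem_singleton_iff.mp hv]

theorem dyn_succ_of_isLeaf (G : SimpleGraph V) {σ : V → ℤ} (hσ : PM σ) {u v : V}
    (hu : IsLeaf G u) (huv : G.Adj v u) (t : ℕ) : dyn G σ (t + 1) u = dyn G σ t v := by
  simp only [dyn, neighborSet_eq_singleton_of_isLeaf G hu huv, finsum_mem_singleton]
  rcases hσ.dyn G t v with h | h <;> simp [h]

theorem ite_pos_sum_eq_of_card_lt {α : Type*} {s : Finset α} {f : α → ℤ} {x : ℤ}
    (hx : x = 1 ∨ x = -1) (p : α → Prop) [DecidablePred p] (hf : ∀ a ∈ s, |f a| ≤ 1)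
    (hp : ∀ a ∈ s, p a → f a = x) (hcard : #(s.filter (¬ p ·)) < #(s.filter p)) :
    (if 0 < ∑ a ∈ s, f a then 1 else -1) = x := by
  have hxx : x * x = 1 := by rcases hx with rfl | rfl <;> norm_num
  have hmajority : (#(s.filter p) : ℤ) = ∑ a ∈ s.filter p, x * f a := by
    rw [sum_congr rfl fun a ha => by rw [(mem_filter.mp ha).elim (hp a), hxx]]
    simp
  have hminority : -(#(s.filter (¬ p ·)) : ℤ) ≤ ∑ a ∈ s.filter (¬ p ·), x * f a := by
    rw [show -(#(s.filter (¬ p ·)) : ℤ) = ∑ _ ∈ s.filter (¬ p ·), (-1 : ℤ) by simp]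
    refine sum_le_sum fun a ha => ?_
    have := abs_le.mp (hf a (mem_filter.mp ha).1)
    rcases hx with rfl | rfl <;> linarith
  have hpos : 0 < x * ∑ a ∈ s, f a := by
    rw [mul_sum, ← sum_filter_add_sum_filter_not s p, ← hmajority]
    have : (#(s.filter (¬ p ·)) : ℤ) < #(s.filter p) := by exact_mod_cast hcard
    linarith
  rcases hx with rfl | rfl
  · rw [if_pos (by linarith)]
  · rw [if_neg (by linarith)]

theorem card_nonleaf_lt_card_leaf (G : SimpleGraph V) [G.LocallyFinite] [DecidablePred (IsLeaf G)]
    {v : V} (hodd : Odd (degree' G v)) (hpassive : degree' G v - 1 < 2 * leafNbrs G v) :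
    #((G.neighborFinset v).filter (¬ IsLeaf G ·)) < #((G.neighborFinset v).filter (IsLeaf G)) := by
  have hdeg : degree' G v = #(G.neighborFinset v) := by
    rw [degree', ← coe_neighborFinset, Set.ncard_coe_finset]
  have hleaf : leafNbrs G v = #((G.neighborFinset v).filter (IsLeaf G)) := by
    rw [leafNbrs, ← Set.ncard_coe_finset, coe_filter]
    simp only [mem_neighborFinset]
  have hsplit := card_filter_add_card_filter_not (s := G.neighborFinset v) (IsLeaf G)
  obtain ⟨k, hk⟩ := hodd
  omega

theorem passive_stationary_general [Fintype V] (G : SimpleGraph V)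
    (hodd : OddDegrees G) (v : V)
    (hpassive : degree' G v - 1 < 2 * leafNbrs G v)
    (σ : V → ℤ) (hσ : PM σ) :
    ∀ t : ℕ, dyn G σ (t + 2) v = dyn G σ t v := by
  classical
  intro t
  rw [dyn_succ_eq_ite_sum]
  refine ite_pos_sum_eq_of_card_lt (hσ.dyn G t v) (IsLeaf G)
    (fun u _ => (hσ.dyn G (t + 1)).abs_le_one u) (fun u hu hleaf => ?_)
    (card_nonleaf_lt_card_leaf G (hodd v) hpassive)
  exact dyn_succ_of_isLeaf G hσ hleaf ((mem_neighborFinset G v u).mp hu) t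

/-- Every passive vertex of a tree with odd degrees (strictly more than
`(deg v - 1)/2` of its neighbours are leaves) is 0-stationary: `ξ_{t+2}(v) = ξ_t(v)` for
every `t ≥ 0`. -/
theorem passive_stationary [Fintype V] (G : SimpleGraph V) (hT : G.IsTree)
    (hodd : OddDegrees G) (v : V)
    (hpassive : degree' G v - 1 < 2 * leafNbrs G v)
    (σ : V → ℤ) (hσ : PM σ) :
    ∀ t : ℕ, dyn G σ (t + 2) v = dyn G σ t v :=
  passive_stationary_general G hodd v hpassive σ hσ
end

section
/- Let T be a tree with all degrees odd and let Q = v_1 ... v_n be a path in T such that at most (deg_T(v_n)-1)/2 neighbours of v_n are leaves and strictly fewer than (deg_T(v_i)-1)/2 neighbours of v_i are leaves for each i < n. Then there exists an initial opinion assignment ξ_0 : V(T) → {-1,1} such that for every i ∈ [n], ξ_{i+1}(v_i) = -1 while ξ_t(v_i) = 1 for all t ≤ i. -/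
open SimpleGraph Set

variable {V : Type*}

/-!
Root the tree at `v 0`. Give opinion `1` to the path and to the leaves hanging off it. Every
other vertex lies in a branch hanging off some `v j`; on such a branch take a checkerboard
pattern (signs alternating along edges). By oddness of the degrees every branch vertex has a
strict majority of its neighbours inside its branch, so the whole branch flips at every step.
Hence, seen from `v j`, the path neighbours and the leaves keep opinion `1` until `v (j-1)`
flips at time `j + 1`, while the roots of the branches at `v j` contribute a sum of alternating
sign. Their signs are chosen so that this sum outweighs the rest at time `j + 1`, making `v j`
flip at time `j + 2`, but not at the earlier times, so `v j` keeps opinion `1` until then. The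
bound on the number of leaf neighbours is what leaves enough branch roots for this.
-/

open Finset Function

lemma eq_of_isLeaf {G : SimpleGraph V} {y a b : V} (hy : IsLeaf G y) (ha : G.Adj y a)
    (hb : G.Adj y b) : a = b := by
  obtain ⟨c, hc⟩ := Set.ncard_eq_one.mp hy
  have ha' : a ∈ G.neighborSet y := ha
  have hb' : b ∈ G.neighborSet y := hb
  rw [hc] at ha' hb'
  exact ha'.trans hb'.symm

section Dynamics

variable [Fintype V] (G : SimpleGraph V) [DecidableRel G.Adj]

lemma degree'_eq_degree (x : V) : degree' G x = G.degree x := by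
  simp only [degree', ← coe_neighborFinset, Set.ncard_coe_finset, card_neighborFinset_eq_degree]

lemma dyn_succ_eq_ite (σ : V → ℤ) (t : ℕ) (x : V) :
    dyn G σ (t + 1) x = if 0 < ∑ u ∈ G.neighborFinset x, dyn G σ t u then 1 else -1 := by
  simp only [dyn, ← coe_neighborFinset, finsum_mem_coe_finset]

lemma pm_dyn {σ : V → ℤ} (hσ : PM σ) : ∀ t, PM (dyn G σ t)
  | 0 => hσ
  | t + 1 => fun x => by rw [dyn_succ_eq_ite]; split_ifs <;> simp

lemma dyn_succ_eq_of_majority {σ : V → ℤ} (hσ : PM σ) {t : ℕ} {x : V} {a : ℤ}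
    (ha : a = 1 ∨ a = -1) {s : Finset V} (hs : s ⊆ G.neighborFinset x)
    (hval : ∀ y ∈ s, dyn G σ t y = a) (hmaj : G.degree x < 2 * #s) :
    dyn G σ (t + 1) x = a := by
  classical
  have hrest : |∑ y ∈ G.neighborFinset x \ s, dyn G σ t y| ≤ #(G.neighborFinset x \ s) := by
    refine (abs_sum_le_sum_abs _ _).trans (le_of_eq ?_)
    rw [card_eq_sum_ones, Nat.cast_sum]
    refine sum_congr rfl fun y _ => ?_
    rcases pm_dyn G hσ t y with h | h <;> simp [h]
  have hcard : #(G.neighborFinset x \ s) + #s = G.degree x := by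
    rw [card_sdiff_add_card_eq_card hs, card_neighborFinset_eq_degree]
  rw [dyn_succ_eq_ite, ← sum_sdiff hs, sum_congr rfl hval, sum_const, nsmul_eq_mul]
  have := abs_le.mp hrest
  rcases ha with rfl | rfl
  · rw [if_pos]; omega
  · rw [if_neg]; omega

lemma dyn_succ_eq_of_isLeaf {σ : V → ℤ} (hσ : PM σ) {y m : V} (hy : IsLeaf G y)
    (hym : G.Adj y m) (t : ℕ) : dyn G σ (t + 1) y = dyn G σ t m := by
  have hnbr : G.neighborFinset y = {m} :=
    Finset.eq_singleton_iff_unique_mem.2 ⟨(mem_neighborFinset _ _ _).2 hym,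
      fun b hb => eq_of_isLeaf hy ((mem_neighborFinset _ _ _).1 hb) hym⟩
  rw [dyn_succ_eq_ite, hnbr, sum_singleton]
  rcases pm_dyn G hσ t m with h | h <;> simp [h]

lemma dyn_eq_neg_one_pow_mul_of_alternating {σ : V → ℤ} (hσ : PM σ) {S : Set V}
    [DecidablePred (· ∈ S)] (halt : ∀ x ∈ S, ∀ y ∈ S, G.Adj x y → σ y = -σ x)
    (hmaj : ∀ x ∈ S, G.degree x < 2 * #{y ∈ G.neighborFinset x | y ∈ S}) (t : ℕ) :
    ∀ x ∈ S, dyn G σ t x = (-1) ^ t * σ x := by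
  induction t with
  | zero => intro x _; rw [pow_zero, one_mul]; rfl
  | succ t ih =>
    intro x hx
    refine dyn_succ_eq_of_majority G hσ ?_ (filter_subset _ _) (fun y hy => ?_) (hmaj x hx)
    · rcases hσ x with h | h <;> rcases neg_one_pow_eq_or ℤ (t + 1) with h' | h' <;> simp [h, h']
    · rw [mem_filter, mem_neighborFinset] at hy
      rw [ih y hy.2, halt x hx y hy.2 hy.1, pow_succ]
      ring

end Dynamics

lemma exists_pm_sum_eq {ι α : Type*} (s : ι → Finset α)
    (hs : Pairwise (Disjoint on s)) (a : ι → ℤ) (ha : ∀ i, |a i| ≤ #(s i))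
    (hpar : ∀ i, Even (#(s i) + a i)) : ∃ f : α → ℤ, PM f ∧ ∀ i, ∑ x ∈ s i, f x = a i := by
  classical
  have hA : ∀ i, ∃ A ⊆ s i, 2 * (#A : ℤ) = #(s i) + a i := by
    intro i
    obtain ⟨k, hk⟩ := hpar i
    have := abs_le.mp (ha i)
    obtain ⟨A, hAs, hAc⟩ := exists_subset_card_eq (s := s i) (n := k.toNat) (by omega)
    exact ⟨A, hAs, by omega⟩
  choose A hAs hAc using hA
  refine ⟨fun x => if ∃ i, x ∈ A i then 1 else -1, fun x => by dsimp only; split_ifs <;> simp,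
    fun i => ?_⟩
  have hval : ∀ x ∈ s i,
      (if ∃ j, x ∈ A j then 1 else -1 : ℤ) = 2 * (if x ∈ A i then 1 else 0) - 1 := by
    intro x hx
    have : (∃ j, x ∈ A j) ↔ x ∈ A i := ⟨fun ⟨j, hj⟩ => by
      obtain rfl : j = i := by_contra fun hji => disjoint_left.mp (hs hji) (hAs j hj) hx
      exact hj, fun h => ⟨i, h⟩⟩
    by_cases h : x ∈ A i <;> simp [h, this]
  rw [sum_congr rfl hval, sum_sub_distrib, ← mul_sum, sum_ite_mem,
    Finset.inter_eq_right.mpr (hAs i)]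
  simp only [sum_const, nsmul_eq_mul, mul_one]
  linarith [hAc i]

namespace SimpleGraph.IsTree

variable {G : SimpleGraph V} (hT : G.IsTree) (r : V)

noncomputable def pathTo (x : V) : G.Walk x r := (hT.existsUnique_path x r).exists.choose

lemma isPath_pathTo (x : V) : (hT.pathTo r x).IsPath :=
  (hT.existsUnique_path x r).exists.choose_spec

lemma eq_pathTo {x : V} {p : G.Walk x r} (hp : p.IsPath) : p = hT.pathTo r x :=
  (hT.existsUnique_path x r).unique hp (hT.isPath_pathTo r x)

noncomputable def depth (x : V) : ℕ := (hT.pathTo r x).length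

noncomputable def parent (x : V) : V := (hT.pathTo r x).snd

lemma parent_root : hT.parent r r = r := by
  rw [parent, ← hT.eq_pathTo r Walk.IsPath.nil, Walk.snd, Walk.getVert_of_length_le]
  simp

lemma adj_parent {x : V} (hx : x ≠ r) : G.Adj x (hT.parent r x) :=
  Walk.adj_snd (Walk.not_nil_of_ne hx)

lemma depth_parent_lt {x : V} (hx : x ≠ r) : hT.depth r (hT.parent r x) < hT.depth r x := by
  have hnil := Walk.not_nil_of_ne (p := hT.pathTo r x) hx
  rw [depth, depth, parent, ← hT.eq_pathTo r (hT.isPath_pathTo r x).tail,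
    ← Walk.length_tail_add_one hnil]
  exact Nat.lt_succ_self _

lemma eq_parent_or_eq_parent_of_adj {x y : V} (hxy : G.Adj x y) :
    y = hT.parent r x ∨ x = hT.parent r y := by
  by_cases hy : y ∈ (hT.pathTo r x).support
  · exact .inl (hT.isAcyclic.eq_snd_of_adj_start (hT.isPath_pathTo r x) hxy hy)
  · right
    rw [parent, ← hT.eq_pathTo r ((hT.isPath_pathTo r x).cons (h := hxy.symm) hy), Walk.snd_cons]

open Classical in
noncomputable def alternatingSign (P : Set V) (θ : V → ℤ) (x : V) : ℤ :=
  if x ∈ P then 1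
  else if _ : x ≠ r ∧ hT.parent r x ∉ P then -alternatingSign P θ (hT.parent r x)
  else θ x
termination_by hT.depth r x
decreasing_by exact hT.depth_parent_lt r ‹x ≠ r ∧ _›.1

def oscillatingSet (P : Set V) : Set V := {x | x ∉ P ∧ (IsLeaf G x → hT.parent r x ∉ P)}

variable {r} {P : Set V} {θ : V → ℤ}

lemma alternatingSign_of_mem {x : V} (hx : x ∈ P) : hT.alternatingSign r P θ x = 1 := by
  rw [alternatingSign, if_pos hx]

lemma alternatingSign_of_parent_mem {x : V} (hx : x ∉ P) (hpx : hT.parent r x ∈ P) :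
    hT.alternatingSign r P θ x = θ x := by
  rw [alternatingSign, if_neg hx, dif_neg (fun h => h.2 hpx)]

lemma alternatingSign_of_parent_not_mem {x : V} (hx : x ∉ P) (hxr : x ≠ r)
    (hpx : hT.parent r x ∉ P) :
    hT.alternatingSign r P θ x = -hT.alternatingSign r P θ (hT.parent r x) := by
  rw [alternatingSign, if_neg hx, dif_pos ⟨hxr, hpx⟩]

lemma pm_alternatingSign (hθ : PM θ) : PM (hT.alternatingSign r P θ) := by
  intro x
  induction x using (measure (hT.depth r)).wf.induction with
  | _ x ih =>
    by_cases hx : x ∈ P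
    · exact .inl (hT.alternatingSign_of_mem hx)
    by_cases hpx : x ≠ r ∧ hT.parent r x ∉ P
    · rw [hT.alternatingSign_of_parent_not_mem hx hpx.1 hpx.2]
      rcases ih _ (hT.depth_parent_lt r hpx.1) with h | h <;> simp [h]
    · rw [alternatingSign, if_neg hx, dif_neg hpx]
      exact hθ x

lemma alternatingSign_adj {x y : V} (hx : x ∉ P) (hy : y ∉ P) (hxy : G.Adj x y) :
    hT.alternatingSign r P θ y = -hT.alternatingSign r P θ x := by
  rcases hT.eq_parent_or_eq_parent_of_adj r hxy with h | h
  · have hxr : x ≠ r := fun hxr => hxy.ne (by rw [h, hxr, hT.parent_root])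
    rw [hT.alternatingSign_of_parent_not_mem hx hxr (h ▸ hy), ← h, neg_neg]
  · have hyr : y ≠ r := fun hyr => hxy.ne (by rw [h, hyr, hT.parent_root])
    rw [hT.alternatingSign_of_parent_not_mem hy hyr (h ▸ hx), ← h]

lemma eq_parent_of_adj_of_not_mem_oscillatingSet (hr : r ∈ P)
    (hP : ∀ x ∈ P, hT.parent r x ∈ P) {x y : V} (hx : x ∈ hT.oscillatingSet r P)
    (hxy : G.Adj x y) (hy : y ∉ hT.oscillatingSet r P) : y = hT.parent r x ∧ y ∈ P := by
  by_cases hyP : y ∈ P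
  · exact ⟨(hT.eq_parent_or_eq_parent_of_adj r hxy).resolve_right fun h => hx.1 (h ▸ hP y hyP), hyP⟩
  · have hyleaf : IsLeaf G y ∧ hT.parent r y ∈ P := by
      by_contra h
      exact hy ⟨hyP, fun hl hp => h ⟨hl, hp⟩⟩
    have hyr : y ≠ r := fun h => hyP (h ▸ hr)
    exact absurd (eq_of_isLeaf hyleaf.1 hxy.symm (hT.adj_parent r hyr) ▸ hyleaf.2) hx.1

lemma degree_lt_two_mul_card_oscillatingSet [Fintype V] [DecidableRel G.Adj]
    [DecidablePred (· ∈ hT.oscillatingSet r P)] (hodd : OddDegrees G) (hr : r ∈ P)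
    (hP : ∀ x ∈ P, hT.parent r x ∈ P) {x : V} (hx : x ∈ hT.oscillatingSet r P) :
    G.degree x < 2 * #{y ∈ G.neighborFinset x | y ∈ hT.oscillatingSet r P} := by
  have hout : ∀ y ∈ {y ∈ G.neighborFinset x | y ∉ hT.oscillatingSet r P},
      y = hT.parent r x ∧ y ∈ P := fun y hy => by
    rw [mem_filter, mem_neighborFinset] at hy
    exact hT.eq_parent_of_adj_of_not_mem_oscillatingSet hr hP hx hy.1 hy.2
  have hsplit := card_filter_add_card_filter_not (s := G.neighborFinset x)
    (· ∈ hT.oscillatingSet r P)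
  rw [card_neighborFinset_eq_degree] at hsplit
  have hdeg : 0 < G.degree x :=
    G.degree_pos_iff_exists_adj x |>.2 ⟨_, hT.adj_parent r fun h => hx.1 (h ▸ hr)⟩
  rcases Finset.eq_empty_or_nonempty {y ∈ G.neighborFinset x | y ∉ hT.oscillatingSet r P}
    with h | ⟨y, hy⟩
  · rw [h, Finset.card_empty] at hsplit
    omega
  · -- the only neighbour outside is the parent, which lies on `P`, so `x` is no leaf
    have hone := Finset.card_le_one.2 fun a ha b hb => (hout a ha).1.trans (hout b hb).1.symm
    obtain ⟨rfl, hpx⟩ := hout y hy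
    have hnl : degree' G x ≠ 1 := fun h => hx.2 h hpx
    obtain ⟨k, hk⟩ := hodd x
    rw [degree'_eq_degree] at hnl hk
    omega

lemma dyn_alternatingSign [Fintype V] [DecidableRel G.Adj]
    (hodd : OddDegrees G) (hr : r ∈ P) (hP : ∀ x ∈ P, hT.parent r x ∈ P) (hθ : PM θ) (t : ℕ)
    {x : V} (hx : x ∈ hT.oscillatingSet r P) :
    dyn G (hT.alternatingSign r P θ) t x = (-1) ^ t * hT.alternatingSign r P θ x := by
  classical
  exact dyn_eq_neg_one_pow_mul_of_alternating G (hT.pm_alternatingSign hθ)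
    (fun x hx y hy hxy => hT.alternatingSign_adj hx.1 hy.1 hxy)
    (fun x hx => hT.degree_lt_two_mul_card_oscillatingSet hodd hr hP hx) t x hx

end SimpleGraph.IsTree

section PathInTree

variable {G : SimpleGraph V} {n : ℕ} {v : Fin n → V}

def AdjConsecutive (G : SimpleGraph V) (v : Fin n → V) : Prop :=
  ∀ (i : ℕ) (h : i + 1 < n), G.Adj (v ⟨i, Nat.lt_of_succ_lt h⟩) (v ⟨i + 1, h⟩)

lemma AdjConsecutive.parent_eq (hadj : AdjConsecutive G v) (hT : G.IsTree) (hinj : Injective v)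
    (k : Fin n) : hT.parent (v ⟨0, k.pos⟩) (v k) = v ⟨k - 1, by omega⟩ := by
  obtain ⟨k, hk⟩ := k
  induction k with
  | zero => exact hT.parent_root _
  | succ k ih =>
    rcases hT.eq_parent_or_eq_parent_of_adj (v ⟨0, by omega⟩) (hadj k hk) with h | h
    · have : k + 1 = k - 1 := Fin.ext_iff.mp (hinj (h.trans (ih (by omega))))
      omega
    · exact h.symm

lemma AdjConsecutive.consecutive_of_adj (hadj : AdjConsecutive G v) (hT : G.IsTree)
    (hinj : Injective v) {j k : Fin n} (h : G.Adj (v j) (v k)) :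
    (j : ℕ) = k + 1 ∨ (k : ℕ) = j + 1 := by
  have hjk : (j : ℕ) ≠ k := fun e => h.ne (congrArg v (Fin.ext e))
  rcases hT.eq_parent_or_eq_parent_of_adj (v ⟨0, j.pos⟩) h with e | e
  · have : (k : ℕ) = j - 1 := Fin.ext_iff.mp (hinj (e.trans (hadj.parent_eq hT hinj j)))
    omega
  · have : (j : ℕ) = k - 1 := Fin.ext_iff.mp (hinj (e.trans (hadj.parent_eq hT hinj k)))
    omega

lemma AdjConsecutive.parent_eq_of_adj (hadj : AdjConsecutive G v) (hT : G.IsTree)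
    (hinj : Injective v) {j : Fin n} {u : V} (hu : u ∉ Set.range v) (hju : G.Adj (v j) u) :
    hT.parent (v ⟨0, j.pos⟩) u = v j := by
  rcases hT.eq_parent_or_eq_parent_of_adj (v ⟨0, j.pos⟩) hju with h | h
  · exact absurd ⟨_, (h.trans (hadj.parent_eq hT hinj j)).symm⟩ hu
  · exact h.symm

end PathInTree

section Travelling

open Classical

variable [Fintype V] {G : SimpleGraph V} {n : ℕ} {v : Fin n → V}

/-- These neighbours hold opinion `1` until the path next to them flips; the others
(`branchNbrs`) are roots of branches that flip at every step. -/
noncomputable def friendlyNbrs (G : SimpleGraph V) (v : Fin n → V) (x : V) : Finset V :=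
  {u ∈ G.neighborFinset x | u ∈ Set.range v ∨ IsLeaf G u}

noncomputable def branchNbrs (G : SimpleGraph V) (v : Fin n → V) (x : V) : Finset V :=
  {u ∈ G.neighborFinset x | ¬(u ∈ Set.range v ∨ IsLeaf G u)}

/-- The branch neighbours of `v j` will sum to `(-1) ^ (s + j) * excess j f` at time `s`, where
`f` is the number of friendly neighbours: this outweighs the friendly sum at time `j + 1` (when
`v (j-1)` has already flipped if `j ≠ 0`), but not at the earlier times of the other parity. -/
def excess (j f : ℕ) : ℤ := if j = 0 then f + 1 else f - 1

def OnSchedule (ξ : ℕ → V → ℤ) (v : Fin n → V) (s : ℕ) : Prop :=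
  ∀ k : Fin n, s ≤ k + 2 → ξ s (v k) = if s ≤ k + 1 then 1 else -1

lemma pred_mem_friendlyNbrs (hadj : AdjConsecutive G v) {j : Fin n} (hj : (j : ℕ) ≠ 0) :
    v ⟨j - 1, by omega⟩ ∈ friendlyNbrs G v (v j) := by
  have h := hadj (j - 1) (by omega)
  simp only [Nat.sub_add_cancel (Nat.one_le_iff_ne_zero.mpr hj)] at h
  simp [friendlyNbrs, h.symm]

lemma card_friendlyNbrs_le (hT : G.IsTree) (hinj : Injective v) (hadj : AdjConsecutive G v)
    (j : Fin n) :
    #(friendlyNbrs G v (v j)) ≤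
      leafNbrs G (v j) + (if (j : ℕ) = 0 then 0 else 1) + (if (j : ℕ) + 1 < n then 1 else 0) := by
  have hleaf : leafNbrs G (v j) = #{u ∈ G.neighborFinset (v j) | IsLeaf G u} := by
    rw [leafNbrs, ← Set.ncard_coe_finset]
    congr 1
    ext u
    simp
  have hsub : friendlyNbrs G v (v j) ⊆ {u ∈ G.neighborFinset (v j) | IsLeaf G u} ∪
      ((if (j : ℕ) = 0 then ∅ else {v ⟨j - 1, by omega⟩}) ∪
        (if h : (j : ℕ) + 1 < n then {v ⟨j + 1, h⟩} else ∅)) := by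
    intro u hu
    simp only [friendlyNbrs, Finset.mem_filter, mem_neighborFinset] at hu
    obtain ⟨hju, ⟨k, rfl⟩ | hleaf⟩ := hu
    · rw [Finset.mem_union, Finset.mem_union]
      right
      rcases hadj.consecutive_of_adj hT hinj hju with h | h
      · left
        rw [if_neg (by omega), Finset.mem_singleton]
        congr 1
        ext
        simp only
        omega
      · right
        rw [dif_pos (by omega), Finset.mem_singleton]
        congr 1
        ext
        exact h
    · simp [hju, hleaf]
  refine (Finset.card_le_card hsub).trans ((Finset.card_union_le _ _).trans ?_)
  rw [hleaf, add_assoc]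
  refine Nat.add_le_add_left ((Finset.card_union_le _ _).trans (Nat.add_le_add ?_ ?_)) _
  · split_ifs <;> simp
  · split_ifs <;> simp

lemma dyn_friendlyNbrs (hT : G.IsTree) (hinj : Injective v) (hadj : AdjConsecutive G v)
    (hn : 0 < n) {θ : V → ℤ} (hθ : PM θ) (hθleaf : ∀ u, IsLeaf G u → θ u = 1) {s : ℕ}
    (ih : ∀ s' ≤ s, OnSchedule (dyn G (hT.alternatingSign (v ⟨0, hn⟩) (Set.range v) θ)) v s')
    {j : Fin n} (hs : s ≤ j + 1) {u : V} (hu : u ∈ friendlyNbrs G v (v j)) :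
    dyn G (hT.alternatingSign (v ⟨0, hn⟩) (Set.range v) θ) s u =
      if s = j + 1 ∧ u = v ⟨j - 1, by omega⟩ then -1 else 1 := by
  rw [friendlyNbrs, Finset.mem_filter, mem_neighborFinset] at hu
  obtain ⟨hju, hu⟩ := hu
  by_cases hup : u ∈ Set.range v
  · obtain ⟨k, rfl⟩ := hup
    rcases hadj.consecutive_of_adj hT hinj hju with h | h
    · have hk : v k = v ⟨j - 1, by omega⟩ := congrArg v (Fin.ext (by simp only; omega))
      rw [ih s le_rfl k (by omega), hk]
      simp only [and_true]
      split_ifs <;> omega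
    · rw [ih s le_rfl k (by omega), if_pos (by omega), if_neg]
      rintro ⟨-, e⟩
      have := Fin.ext_iff.mp (hinj e)
      simp only at this
      omega
  · have hleaf := hu.resolve_left hup
    rw [if_neg (fun h => hup ⟨_, h.2.symm⟩)]
    cases s with
    | zero =>
      rw [← hθleaf u hleaf]
      exact hT.alternatingSign_of_parent_mem hup
        (hadj.parent_eq_of_adj hT hinj hup hju ▸ ⟨j, rfl⟩)
    | succ s =>
      rw [dyn_succ_eq_of_isLeaf G (hT.pm_alternatingSign hθ) hleaf hju.symm,
        ih s (by omega) j (by omega), if_pos (by omega)]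

lemma sum_dyn_friendlyNbrs (hT : G.IsTree) (hinj : Injective v) (hadj : AdjConsecutive G v)
    (hn : 0 < n) {θ : V → ℤ} (hθ : PM θ) (hθleaf : ∀ u, IsLeaf G u → θ u = 1) {s : ℕ}
    (ih : ∀ s' ≤ s, OnSchedule (dyn G (hT.alternatingSign (v ⟨0, hn⟩) (Set.range v) θ)) v s')
    {j : Fin n} (hs : s ≤ j + 1) :
    ∑ u ∈ friendlyNbrs G v (v j), dyn G (hT.alternatingSign (v ⟨0, hn⟩) (Set.range v) θ) s u =
      #(friendlyNbrs G v (v j)) - if s = j + 1 ∧ (j : ℕ) ≠ 0 then 2 else 0 := by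
  rw [sum_congr rfl fun u hu => dyn_friendlyNbrs hT hinj hadj hn hθ hθleaf ih hs hu]
  split_ifs with hc
  · have hmem := pred_mem_friendlyNbrs hadj hc.2
    rw [← add_sum_erase _ _ hmem, if_pos ⟨hc.1, rfl⟩,
      sum_congr rfl fun u hu => if_neg fun h => (Finset.mem_erase.1 hu).1 h.2, sum_const,
      card_erase_of_mem hmem, nsmul_one, Nat.cast_sub (card_pos.2 ⟨_, hmem⟩)]
    ring
  · rw [sum_congr rfl fun u hu => if_neg ?_, sum_const, nsmul_one, sub_zero]
    rintro ⟨rfl, rfl⟩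
    have hj : (j : ℕ) = 0 := by tauto
    rw [friendlyNbrs, Finset.mem_filter, mem_neighborFinset] at hu
    exact hu.1.ne (congrArg v (Fin.ext (by simp only; omega)))

lemma sum_dyn_branchNbrs (hT : G.IsTree) (hodd : OddDegrees G) (hinj : Injective v)
    (hadj : AdjConsecutive G v) (hn : 0 < n) {θ : V → ℤ} (hθ : PM θ) (s : ℕ) (j : Fin n) :
    ∑ u ∈ branchNbrs G v (v j), dyn G (hT.alternatingSign (v ⟨0, hn⟩) (Set.range v) θ) s u =
      (-1) ^ s * ∑ u ∈ branchNbrs G v (v j), θ u := by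
  rw [mul_sum]
  refine sum_congr rfl fun u hu => ?_
  rw [branchNbrs, Finset.mem_filter, mem_neighborFinset, not_or] at hu
  obtain ⟨hju, hup, hleaf⟩ := hu
  have hpu := hadj.parent_eq_of_adj hT hinj hup hju
  have hclosed : ∀ x ∈ Set.range v, hT.parent (v ⟨0, hn⟩) x ∈ Set.range v := by
    rintro _ ⟨k, rfl⟩
    exact ⟨_, (hadj.parent_eq hT hinj k).symm⟩
  rw [hT.dyn_alternatingSign hodd (Set.mem_range_self _) hclosed hθ s ⟨hup, (absurd · hleaf)⟩,
    hT.alternatingSign_of_parent_mem hup (by rw [hpu]; exact ⟨j, rfl⟩)]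

lemma zero_lt_add_excess_iff {s j f : ℕ} (hs : s ≤ j + 1) (hf : j ≠ 0 → 1 ≤ f) :
    0 < (f : ℤ) - (if s = j + 1 ∧ j ≠ 0 then 2 else 0) + (-1) ^ s * ((-1) ^ j * excess j f) ↔
      s ≤ j := by
  rw [← mul_assoc, ← pow_add, excess]
  rcases Nat.even_or_odd (s + j) with ⟨m, hm⟩ | ⟨m, hm⟩
  · rw [Even.neg_one_pow ⟨m, hm⟩]
    split_ifs <;> omega
  · rw [Odd.neg_one_pow ⟨m, hm⟩]
    split_ifs <;> omega

lemma onSchedule_dyn (hT : G.IsTree) (hodd : OddDegrees G) (hinj : Injective v)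
    (hadj : AdjConsecutive G v) (hn : 0 < n) {θ : V → ℤ} (hθ : PM θ)
    (hθleaf : ∀ u, IsLeaf G u → θ u = 1)
    (hθsum : ∀ j : Fin n, ∑ u ∈ branchNbrs G v (v j), θ u =
      (-1) ^ (j : ℕ) * excess j #(friendlyNbrs G v (v j))) (s : ℕ) :
    OnSchedule (dyn G (hT.alternatingSign (v ⟨0, hn⟩) (Set.range v) θ)) v s := by
  induction s using Nat.strong_induction_on with
  | _ s ih =>
  intro j hs
  cases s with
  | zero =>
    rw [if_pos (Nat.zero_le _)]
    exact hT.alternatingSign_of_mem ⟨j, rfl⟩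
  | succ s =>
    have ih' : ∀ s' ≤ s, OnSchedule (dyn G (hT.alternatingSign (v ⟨0, hn⟩) (Set.range v) θ)) v s' :=
      fun s' hs' => ih s' (by omega)
    have hf : (j : ℕ) ≠ 0 → 1 ≤ #(friendlyNbrs G v (v j)) :=
      fun hj => card_pos.2 ⟨_, pred_mem_friendlyNbrs hadj hj⟩
    have hsum := sum_filter_add_sum_filter_not (G.neighborFinset (v j))
      (fun u => u ∈ Set.range v ∨ IsLeaf G u)
      (dyn G (hT.alternatingSign (v ⟨0, hn⟩) (Set.range v) θ) s)
    rw [← friendlyNbrs, ← branchNbrs, sum_dyn_friendlyNbrs hT hinj hadj hn hθ hθleaf ih' (by omega),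
      sum_dyn_branchNbrs hT hodd hinj hadj hn hθ, hθsum] at hsum
    rw [dyn_succ_eq_ite, ← hsum, if_congr (zero_lt_add_excess_iff (by omega) hf) rfl rfl]
    split_ifs <;> omega

lemma exists_branch_signs (hT : G.IsTree) (hodd : OddDegrees G) (hinj : Injective v)
    (hadj : AdjConsecutive G v) (hleaf : ∀ j : Fin n,
      2 * leafNbrs G (v j) + (if (j : ℕ) + 1 < n then 2 else 0) ≤ degree' G (v j) - 1) :
    ∃ θ : V → ℤ, PM θ ∧ (∀ u, IsLeaf G u → θ u = 1) ∧ ∀ j : Fin n,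
      ∑ u ∈ branchNbrs G v (v j), θ u = (-1) ^ (j : ℕ) * excess j #(friendlyNbrs G v (v j)) := by
  have hdisj : Pairwise (Disjoint on fun j : Fin n => branchNbrs G v (v j)) := by
    intro i j hij
    refine Finset.disjoint_left.2 fun u hui huj => hij (hinj ?_)
    simp only [branchNbrs, Finset.mem_filter, mem_neighborFinset, not_or] at hui huj
    rw [← hadj.parent_eq_of_adj hT hinj huj.2.1 hui.1,
      ← hadj.parent_eq_of_adj hT hinj huj.2.1 huj.1]
  have hfeas : ∀ j : Fin n,
      |(-1) ^ (j : ℕ) * excess j #(friendlyNbrs G v (v j))| ≤ #(branchNbrs G v (v j)) ∧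
      Even ((#(branchNbrs G v (v j)) : ℤ) +
        (-1) ^ (j : ℕ) * excess j #(friendlyNbrs G v (v j))) := by
    intro j
    have hcard := card_filter_add_card_filter_not (s := G.neighborFinset (v j))
      (fun u => u ∈ Set.range v ∨ IsLeaf G u)
    rw [← friendlyNbrs, ← branchNbrs, card_neighborFinset_eq_degree, ← degree'_eq_degree] at hcard
    have hf := card_friendlyNbrs_le hT hinj hadj j
    have hl := hleaf j
    obtain ⟨d, hd⟩ := hodd (v j)
    rw [abs_mul, abs_neg_one_pow, one_mul, abs_le, Int.even_iff, excess]
    rcases neg_one_pow_eq_or ℤ (j : ℕ) with h | h <;> rw [h] <;> split_ifs at hf hl ⊢ <;> omega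
  obtain ⟨f, hf, hsum⟩ := exists_pm_sum_eq _ hdisj _ (fun j => (hfeas j).1) (fun j => (hfeas j).2)
  refine ⟨fun u => if IsLeaf G u then 1 else f u, fun u => ?_, fun u hu => if_pos hu, fun j => ?_⟩
  · dsimp only
    split_ifs
    exacts [.inl rfl, hf u]
  · rw [← hsum j]
    refine sum_congr rfl fun u hu => if_neg ?_
    simp only [branchNbrs, Finset.mem_filter, not_or] at hu
    exact hu.2.2

end Travelling

/-- For a path `Q = v_0 … v_{n-1}` (indexed from 0) in a tree with odd
degrees such that at most `(deg - 1)/2` neighbours of the last vertex are leaves and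
strictly fewer than `(deg - 1)/2` neighbours of every other path vertex are leaves, there
is an initial opinion assignment so that `ξ_{i+2}(v_i) = -1` while `ξ_t(v_i) = 1` for
all `t ≤ i + 1` (this is the paper's claim `ξ_{i+1}(v_i) = -1`, `ξ_t(v_i) = 1` for
`t ≤ i` with 1-based indexing). -/
theorem exists_travelling_assignment [Fintype V] (G : SimpleGraph V) (hT : G.IsTree)
    (hodd : OddDegrees G) (n : ℕ) (hn : 0 < n) (v : Fin n → V)
    (hinj : Function.Injective v)
    (hadj : ∀ (i : ℕ) (h : i + 1 < n),
      G.Adj (v ⟨i, by omega⟩) (v ⟨i + 1, h⟩))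
    (hlast : 2 * leafNbrs G (v ⟨n - 1, by omega⟩) ≤ degree' G (v ⟨n - 1, by omega⟩) - 1)
    (hmid : ∀ i : Fin n, (i : ℕ) < n - 1 → 2 * leafNbrs G (v i) < degree' G (v i) - 1) :
    ∃ σ : V → ℤ, PM σ ∧ ∀ i : Fin n,
      dyn G σ ((i : ℕ) + 2) (v i) = -1 ∧ ∀ t ≤ (i : ℕ) + 1, dyn G σ t (v i) = 1 := by
  classical
  have hleaf : ∀ j : Fin n,
      2 * leafNbrs G (v j) + (if (j : ℕ) + 1 < n then 2 else 0) ≤ degree' G (v j) - 1 := by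
    intro j
    split_ifs with hj
    · obtain ⟨d, hd⟩ := hodd (v j)
      have := hmid j (by omega)
      omega
    · have hjlast : j = ⟨n - 1, by omega⟩ := Fin.ext (by simp only; omega)
      simpa [hjlast] using hlast
  obtain ⟨θ, hθ, hθleaf, hθsum⟩ := exists_branch_signs hT hodd hinj hadj hleaf
  have hsched := onSchedule_dyn hT hodd hinj hadj hn hθ hθleaf hθsum
  refine ⟨hT.alternatingSign (v ⟨0, hn⟩) (Set.range v) θ, hT.pm_alternatingSign hθ,
    fun i => ⟨?_, fun t ht => ?_⟩⟩
  · simpa using hsched (i + 2) i le_rfl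
  · simpa [ht] using hsched t i (by omega)
end

section
/- If a non-root vertex v of a perfect binary tree is weakly t_1-stable and its opinion is constant along even-parity times, i.e., ξ_t(v) = ξ_{t_1}(v) for every t ∈ {t_1, t_1+2, ..., t_2} where t_2 − t_1 is a positive even number, then v is weakly t_2-stable. -/
/-!
Let `σ'` witness the weak `t₁`-stability of `v`, let `ξ'` be the process started from `σ'`, and
put `T = t₂ - t₁`. Information enters the subtree below `v` only through `v`, and at even times
`s ≤ T` the opinion of `v` is the same in `ξ'_s` and `ξ_{t₁ + s}` (it is constant, equal to
`σ' v = ξ_{t₁}(v)`, in both). Hence `ξ'_s` and `ξ_{t₁ + s}` agree at every vertex of the subtree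
whose depth below `v` has the parity of `s`. As trees are bipartite, the opinion of `v` at an even
time only depends on the initial opinions at even distance from `v`; so the vector equal to `ξ'_T`
at even distance from `v` and to `ξ_{t₂}` elsewhere drives `v` like `ξ'_{T + ·}` at even times,
making `v` `0`-stable, and it agrees with `ξ_{t₂}` on the subtree.
-/
open SimpleGraph Set

variable {V : Type*}

/-- `G` is a perfect `k`-ary tree of height `h` rooted at `R`. -/
noncomputable def IsPerfectKAry (G : SimpleGraph V) (R : V) (k h : ℕ) : Prop :=
  G.IsTree ∧ (∀ v, degree' G v = 1 ∨ degree' G v = k + 1) ∧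
    (∀ v, degree' G v = 1 → G.dist R v = h) ∧ degree' G R = k + 1

/-- The set of descendants of `v` (including `v`) in the tree rooted at `R`:
those vertices `u` such that `v` lies on the (unique) geodesic from `R` to `u`. -/
noncomputable def desc (G : SimpleGraph V) (R v : V) : Set V :=
  {u | G.dist R u = G.dist R v + G.dist v u}

/-- `p` is the parent of `c` in the tree rooted at `R`. -/
noncomputable def IsParent (G : SimpleGraph V) (R p c : V) : Prop :=
  G.Adj p c ∧ G.dist R p + 1 = G.dist R c

/-- `v` is weakly `t`-stable for the process `ξ` (in the tree rooted at `R`): there is a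
vector of initial opinions agreeing with `ξ t` on the subtree of descendants of `v` for
which `v` is 0-stable. -/
noncomputable def WeaklyStable (G : SimpleGraph V) (R : V) (ξ : ℕ → V → ℤ) (v : V)
    (t : ℕ) : Prop :=
  ∃ σ' : V → ℤ, PM σ' ∧ (∀ w ∈ desc G R v, σ' w = ξ t w) ∧
    ∀ s, s % 2 = 0 → dyn G σ' (s + 2) v = dyn G σ' s v


namespace SimpleGraph

variable {G : SimpleGraph V}

lemma Connected.exists_adj_dist_add_one_eq (hG : G.Connected) {v w : V} (hvw : v ≠ w) :
    ∃ x, G.Adj x w ∧ G.dist v x + 1 = G.dist v w := by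
  obtain ⟨p, hp⟩ := hG.exists_walk_length_eq_dist w v
  cases p with
  | nil => exact absurd rfl hvw
  | @cons _ x _ hwx q =>
    refine ⟨x, hwx.symm, ?_⟩
    have hq : G.dist x v ≤ q.length := dist_le q
    have htri : G.dist w v ≤ G.dist w x + G.dist x v := hG.dist_triangle
    rw [Walk.length_cons] at hp
    rw [dist_eq_one_iff_adj.mpr hwx] at htri
    rw [dist_comm (u := v), dist_comm (u := v)]
    omega

lemma IsTree.eq_of_adj_of_dist_add_one_eq (hG : G.IsTree) {r w x y : V} (hx : G.Adj x w)
    (hy : G.Adj y w) (hdx : G.dist r x + 1 = G.dist r w) (hdy : G.dist r y + 1 = G.dist r w) :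
    x = y := by
  obtain ⟨p, hp⟩ := hG.connected.exists_walk_length_eq_dist r x
  obtain ⟨q, hq⟩ := hG.connected.exists_walk_length_eq_dist r y
  have hP := (p.concat hx).isPath_of_length_eq_dist (by rw [Walk.length_concat, hp, hdx])
  have hQ := (q.concat hy).isPath_of_length_eq_dist (by rw [Walk.length_concat, hq, hdy])
  simpa using congrArg Walk.penultimate ((hG.existsUnique_path r w).unique hP hQ)

lemma self_mem_desc (R v : V) : v ∈ desc G R v := by
  simp [desc]

lemma IsTree.mem_desc_of_adj (hG : G.IsTree) {R v w u : V} (hw : w ∈ desc G R v) (hwv : w ≠ v)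
    (hadj : G.Adj w u) : u ∈ desc G R v := by
  have hconn := hG.connected
  simp only [desc, Set.mem_ofPred_eq] at *
  obtain ⟨x, hxw, hvx⟩ := hconn.exists_adj_dist_add_one_eq hwv.symm
  have hRx : G.dist R x + 1 = G.dist R w := by
    have : G.dist R x ≤ G.dist R v + G.dist v x := hconn.dist_triangle
    have := hG.dist_eq_dist_add_one_of_adj R hxw
    omega
  have hRu : G.dist R u ≤ G.dist R v + G.dist v u := hconn.dist_triangle
  have hvu : G.dist v u ≤ G.dist v w + G.dist w u := hconn.dist_triangle
  rw [dist_eq_one_iff_adj.mpr hadj] at hvu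
  rcases hG.dist_eq_dist_add_one_of_adj R hadj with hup | hdown
  · -- `u` is the parent of `w`, as is the neighbour `x` of `w` on the geodesic from `v`
    obtain rfl := hG.eq_of_adj_of_dist_add_one_eq hadj.symm hxw hup.symm hRx
    omega
  · omega

end SimpleGraph

section Dynamics

variable {G : SimpleGraph V}

lemma dyn_succ_apply (σ : V → ℤ) (t : ℕ) (v : V) :
    dyn G σ (t + 1) v = if 0 < ∑ᶠ u ∈ G.neighborSet v, dyn G σ t u then 1 else -1 :=
  rfl

lemma dyn_add (σ : V → ℤ) (a b : ℕ) : dyn G (dyn G σ a) b = dyn G σ (a + b) := by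
  induction b with
  | zero => rfl
  | succ b ih => funext v; rw [dyn_succ_apply, ih]; rfl

lemma pm_dyn_of_pos (σ : V → ℤ) {t : ℕ} (ht : 0 < t) : PM (dyn G σ t) := by
  obtain ⟨t, rfl⟩ := Nat.exists_eq_add_of_lt ht
  intro v
  rw [dyn_succ_apply]
  split <;> simp

lemma dyn_even_eq_of_stable {σ : V → ℤ} {v : V}
    (hst : ∀ s, s % 2 = 0 → dyn G σ (s + 2) v = dyn G σ s v) {s : ℕ} (hs : s % 2 = 0) :
    dyn G σ s v = σ v := by
  obtain ⟨k, rfl⟩ : ∃ k, s = 2 * k := ⟨s / 2, by omega⟩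
  induction k with
  | zero => rfl
  | succ k ih => rw [Nat.mul_succ, hst _ (by omega), ih (by omega)]

end Dynamics

namespace SimpleGraph

variable {G : SimpleGraph V}

lemma IsTree.dyn_apply_congr (hG : G.IsTree) {σ₁ σ₂ : V → ℤ} {s : ℕ} {w : V}
    (h : ∀ u, G.dist w u % 2 = s % 2 → σ₁ u = σ₂ u) : dyn G σ₁ s w = dyn G σ₂ s w := by
  induction s generalizing w with
  | zero => exact h w (by simp)
  | succ s ih =>
    rw [dyn_succ_apply, dyn_succ_apply]
    congr 2
    refine finsum_mem_congr rfl fun u (hu : G.Adj w u) => ih fun x hx => h x ?_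
    rcases hG.dist_eq_dist_add_one_of_adj x hu with h | h <;>
      rw [dist_comm (u := x), dist_comm (u := x)] at * <;> omega

/-- Information enters the subtree below `v` only through `v`: every neighbour of a vertex
`w ≠ v` of the subtree lies in the subtree. -/
lemma IsTree.dyn_eq_of_eq_on_desc (hG : G.IsTree) {R v : V} {σ₁ σ₂ : V → ℤ} {T : ℕ}
    (hdesc : ∀ w ∈ desc G R v, σ₁ w = σ₂ w)
    (hroot : ∀ s ≤ T, s % 2 = 0 → dyn G σ₁ s v = dyn G σ₂ s v) :
    ∀ s ≤ T, ∀ w ∈ desc G R v, G.dist v w % 2 = s % 2 → dyn G σ₁ s w = dyn G σ₂ s w := by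
  intro s
  induction s with
  | zero => exact fun _ w hw _ => hdesc w hw
  | succ s ih =>
    intro hsT w hw hpar
    by_cases hwv : w = v
    · subst hwv
      exact hroot _ hsT (by simpa using hpar.symm)
    · rw [dyn_succ_apply, dyn_succ_apply]
      congr 2
      refine finsum_mem_congr rfl fun u (hu : G.Adj w u) =>
        ih (by omega) u (hG.mem_desc_of_adj hw hwv hu) ?_
      rcases hG.dist_eq_dist_add_one_of_adj v hu with h | h <;> omega

end SimpleGraph

theorem maintain_weak_stability_general (G : SimpleGraph V) (R : V) (h : ℕ)
    (hperf : IsPerfectKAry G R 2 h) (v : V)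
    (σ : V → ℤ) (t₁ t₂ : ℕ) (hlt : t₁ < t₂) (hpar : Even (t₂ - t₁))
    (hw : WeaklyStable G R (dyn G σ) v t₁)
    (hop : ∀ t, t₁ ≤ t → t ≤ t₂ → t % 2 = t₁ % 2 → dyn G σ t v = dyn G σ t₁ v) :
    WeaklyStable G R (dyn G σ) v t₂ := by
  obtain ⟨hG, -⟩ := hperf
  obtain ⟨σ', -, hagree, hstable⟩ := hw
  obtain ⟨T, rfl⟩ : ∃ T, t₂ = t₁ + T := ⟨t₂ - t₁, by omega⟩
  have hT : T % 2 = 0 := Nat.even_iff.mp (by simpa using hpar)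
  have hsub : ∀ w ∈ desc G R v, G.dist v w % 2 = 0 → dyn G σ' T w = dyn G σ (t₁ + T) w := by
    intro w hw hdist
    rw [← dyn_add]
    refine hG.dyn_eq_of_eq_on_desc hagree (fun s hs hs2 => ?_) T le_rfl w hw (by omega)
    rw [dyn_even_eq_of_stable hstable hs2, hagree v (self_mem_desc R v), dyn_add,
      hop (t₁ + s) (by omega) (by omega) (by omega)]
  set σ₂ : V → ℤ := fun u => if G.dist v u % 2 = 0 then dyn G σ' T u else dyn G σ (t₁ + T) u
  have hshift : ∀ s, s % 2 = 0 → dyn G σ₂ s v = dyn G σ' (T + s) v := fun s hs => by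
    rw [← dyn_add σ' T s]
    exact hG.dyn_apply_congr fun u hu => if_pos (by omega)
  refine ⟨σ₂, fun u => ?_, fun w hw => ?_, fun s hs => ?_⟩
  · simp only [σ₂]
    split <;> apply pm_dyn_of_pos <;> omega
  · simp only [σ₂]
    split_ifs with hdist
    · exact hsub w hw hdist
    · rfl
  · rw [hshift _ (by omega), hshift s hs]
    exact hstable (T + s) (by omega)

/-- If a non-root vertex `v` of a perfect binary tree is weakly
`t₁`-stable and its opinion is constant over the even-parity times
`t ∈ {t₁, t₁+2, …, t₂}` (with `t₂ - t₁` positive and even), then `v` is weakly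
`t₂`-stable. -/
theorem maintain_weak_stability [Fintype V] (G : SimpleGraph V) (R : V) (h : ℕ)
    (hh : 1 ≤ h) (hperf : IsPerfectKAry G R 2 h) (v : V) (hv : v ≠ R)
    (σ : V → ℤ) (hσ : PM σ) (t₁ t₂ : ℕ) (hlt : t₁ < t₂) (hpar : Even (t₂ - t₁))
    (hw : WeaklyStable G R (dyn G σ) v t₁)
    (hop : ∀ t, t₁ ≤ t → t ≤ t₂ → t % 2 = t₁ % 2 → dyn G σ t v = dyn G σ t₁ v) :
    WeaklyStable G R (dyn G σ) v t₂ :=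
  maintain_weak_stability_general G R h hperf v σ t₁ t₂ hlt hpar hw hop
end

section
/- Let t ≥ 0, ξ ∈ {-1,1}, d a positive even integer, and P = v_0 v_1 ... v_d a non-monotone path in a perfect binary tree (i.e., the subtrees T_{v_0} and T_{v_d} are disjoint). If ξ_t(v_i) = ξ for every even i ∈ {0,...,d}, and both v_0 and v_d are weakly t-stable, then v_i is t-stable for every even i. -/
open SimpleGraph Set

variable {V : Type*}

section WSaux

open SimpleGraph Walk

variable [DecidableEq V] {G : SimpleGraph V}

private lemma ws_exists_isPath_length_dist (hc : G.Connected) (x y : V) :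
    ∃ q : G.Walk x y, q.IsPath ∧ q.length = G.dist x y := by
  obtain ⟨q, hq⟩ := hc.exists_walk_length_eq_dist x y
  refine ⟨q.bypass, q.bypass_isPath, le_antisymm ?_ (SimpleGraph.dist_le _)⟩
  exact hq ▸ q.length_bypass_le

private lemma ws_tree_path_length (hT : G.IsTree) {x y : V} (q : G.Walk x y) (hq : q.IsPath) :
    q.length = G.dist x y := by
  obtain ⟨q', hq', hql⟩ := ws_exists_isPath_length_dist hT.1 x y
  have h := hT.2.path_unique ⟨q, hq⟩ ⟨q', hq'⟩
  rw [← hql]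
  exact congrArg (fun r : G.Path x y => r.1.length) h

private lemma ws_concat_isPath (hT : G.IsTree) {x u w : V} {q : G.Walk x u} (hq : q.IsPath)
    (h : G.Adj u w) (hw : w ∉ q.support) : (q.concat h).IsPath := by
  rw [← Walk.isPath_reverse_iff, Walk.reverse_concat]
  exact ((Walk.isPath_reverse_iff q).mpr hq).cons (by simpa using hw)

private lemma ws_adj_dist_cases (hT : G.IsTree) (x : V) {u w : V} (h : G.Adj u w) :
    G.dist x w = G.dist x u + 1 ∨ G.dist x u = G.dist x w + 1 := by
  obtain ⟨q, hq, hql⟩ := ws_exists_isPath_length_dist hT.1 x u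
  by_cases hw : w ∈ q.support
  · right
    have h1 : (q.takeUntil w hw).length = G.dist x w :=
      ws_tree_path_length hT _ (hq.takeUntil hw)
    have h2 : (q.dropUntil w hw).length = G.dist w u :=
      ws_tree_path_length hT _ (hq.dropUntil hw)
    have h3 : G.dist w u = 1 := SimpleGraph.dist_eq_one_iff_adj.mpr h.symm
    have h4 := congrArg Walk.length (q.take_spec hw)
    rw [Walk.length_append] at h4
    omega
  · left
    have hcp : (q.concat h).IsPath := ws_concat_isPath hT hq h hw
    have := ws_tree_path_length hT _ hcp
    rw [Walk.length_concat] at this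
    omega

private lemma ws_parent_unique (hT : G.IsTree) (x : V) {w u₁ u₂ : V}
    (h1 : G.Adj u₁ w) (h2 : G.Adj u₂ w)
    (d1 : G.dist x u₁ + 1 = G.dist x w) (d2 : G.dist x u₂ + 1 = G.dist x w) : u₁ = u₂ := by
  obtain ⟨q1, hq1, hl1⟩ := ws_exists_isPath_length_dist hT.1 x u₁
  obtain ⟨q2, hq2, hl2⟩ := ws_exists_isPath_length_dist hT.1 x u₂
  have hw1 : w ∉ q1.support := by
    intro hw
    have ha := SimpleGraph.dist_le (q1.takeUntil w hw)
    have hb := q1.length_takeUntil_le hw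
    omega
  have hw2 : w ∉ q2.support := by
    intro hw
    have ha := SimpleGraph.dist_le (q2.takeUntil w hw)
    have hb := q2.length_takeUntil_le hw
    omega
  have hQ1 : (q1.concat h1).IsPath := ws_concat_isPath hT hq1 h1 hw1
  have hQ2 : (q2.concat h2).IsPath := ws_concat_isPath hT hq2 h2 hw2
  have heq : q1.concat h1 = q2.concat h2 :=
    congrArg (fun r : G.Path x w => r.1) (hT.2.path_unique ⟨_, hQ1⟩ ⟨_, hQ2⟩)
  have hrev := congrArg Walk.reverse heq
  rw [Walk.reverse_concat, Walk.reverse_concat] at hrev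
  simp only [Walk.cons.injEq] at hrev
  exact hrev.1

private lemma ws_exists_parent (hc : G.Connected) {v w : V} (hne : v ≠ w) :
    ∃ u, G.Adj u w ∧ G.dist v u + 1 = G.dist v w := by
  obtain ⟨q, hq⟩ := hc.exists_walk_length_eq_dist v w
  obtain ⟨a, ha, q', hq'⟩ := Walk.exists_eq_cons_of_ne (Ne.symm hne) q.reverse
  refine ⟨a, ha.symm, ?_⟩
  have hlen : q.reverse.length = G.dist v w := by rw [Walk.length_reverse]; exact hq
  rw [hq', Walk.length_cons] at hlen
  have h1 : G.dist v a ≤ q'.length := by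
    have := SimpleGraph.dist_le q'.reverse
    rwa [Walk.length_reverse] at this
  have h2 : G.dist v w ≤ G.dist v a + G.dist a w := hc.dist_triangle
  have h3 : G.dist a w = 1 := SimpleGraph.dist_eq_one_iff_adj.mpr ha.symm
  omega

private lemma ws_mem_desc {R v u : V} :
    u ∈ desc G R v ↔ G.dist R u = G.dist R v + G.dist v u := Iff.rfl

private lemma ws_mem_desc_self (R v : V) : v ∈ desc G R v := by
  simp [ws_mem_desc, SimpleGraph.dist_self]

private lemma ws_adj_desc (hT : G.IsTree) {R v w u : V} (hw : w ∈ desc G R v)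
    (hadj : G.Adj u w) (hu : u ∉ desc G R v) : w = v := by
  by_contra hne
  have hdw : G.dist R w = G.dist R v + G.dist v w := hw
  rcases ws_adj_dist_cases hT R hadj with hc | hc
  · -- dist R w = dist R u + 1 : u is the parent of w
    obtain ⟨u', hu'adj, hu'd⟩ := ws_exists_parent hT.1 (v := v) (w := w) (fun h => hne h.symm)
    have t1 : G.dist R u' ≤ G.dist R v + G.dist v u' := hT.1.dist_triangle
    have t2 : G.dist R w ≤ G.dist R u' + G.dist u' w := hT.1.dist_triangle
    have t3 : G.dist u' w = 1 := SimpleGraph.dist_eq_one_iff_adj.mpr hu'adj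
    have huu : u = u' := ws_parent_unique hT R hadj hu'adj (by omega) (by omega)
    apply hu
    rw [ws_mem_desc, huu]
    omega
  · -- dist R u = dist R w + 1 : u is a child of w, hence in desc
    apply hu
    rw [ws_mem_desc]
    have t1 : G.dist R u ≤ G.dist R v + G.dist v u := hT.1.dist_triangle
    have t2 : G.dist v u ≤ G.dist v w + G.dist w u := hT.1.dist_triangle
    have t3 : G.dist w u = 1 := SimpleGraph.dist_eq_one_iff_adj.mpr hadj.symm
    omega

private lemma ws_outside_nbr_unique (hT : G.IsTree) {R v u₁ u₂ : V}
    (h1 : G.Adj u₁ v) (h2 : G.Adj u₂ v)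
    (n1 : u₁ ∉ desc G R v) (n2 : u₂ ∉ desc G R v) : u₁ = u₂ := by
  have par : ∀ u, G.Adj u v → u ∉ desc G R v → G.dist R u + 1 = G.dist R v := by
    intro u hu hnd
    rcases ws_adj_dist_cases hT R hu with hc | hc
    · omega
    · exfalso
      apply hnd
      rw [ws_mem_desc]
      have t3 : G.dist v u = 1 := SimpleGraph.dist_eq_one_iff_adj.mpr hu.symm
      omega
  exact ws_parent_unique hT R h1 h2 (par u₁ h1 n1) (par u₂ h2 n2)

private lemma ws_endpoint (hT : G.IsTree) (R : V) {d : ℕ} (hd2 : 2 ≤ d) (q : ℕ → V)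
    (hinj : ∀ i j, i ≤ d → j ≤ d → q i = q j → i = j)
    (hadj : ∀ i, i < d → G.Adj (q i) (q (i + 1)))
    (hout : q d ∉ desc G R (q 0)) :
    ∀ u, G.Adj u (q 0) → u ∉ desc G R (q 0) → u = q 1 := by
  have hq1 : q 1 ∉ desc G R (q 0) := by
    intro h1
    apply hout
    have hall : ∀ j, j ≤ d → q j ∈ desc G R (q 0) := by
      intro j
      induction j with
      | zero => intro _; exact ws_mem_desc_self R (q 0)
      | succ j ihj =>
        intro hj
        by_cases hj0 : j = 0
        · subst hj0; exact h1
        · have hdj := ihj (by omega)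
          by_contra hnd
          have := ws_adj_desc hT hdj (hadj j (by omega)).symm hnd
          exact hj0 (hinj j 0 (by omega) (by omega) this)
    exact hall d le_rfl
  intro u hu hnd
  exact ws_outside_nbr_unique hT hu (hadj 0 (by omega)).symm hnd hq1

end WSaux
section WSdyn

open SimpleGraph

variable [Fintype V] [DecidableEq V] {G : SimpleGraph V}

private lemma ws_dyn_succ (G : SimpleGraph V) (σ : V → ℤ) (s : ℕ) (v : V) :
    dyn G σ (s + 1) v = if 0 < ∑ᶠ u ∈ G.neighborSet v, dyn G σ s u then 1 else -1 := rfl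

private lemma ws_PM_dyn (G : SimpleGraph V) (σ : V → ℤ) (hσ : PM σ) (s : ℕ) :
    PM (dyn G σ s) := by
  cases s with
  | zero => exact hσ
  | succ n => intro v; rw [ws_dyn_succ]; split <;> simp

private lemma ws_finsum_nbr (G : SimpleGraph V) (v : V) (f : V → ℤ) :
    ∑ᶠ u ∈ G.neighborSet v, f u
      = ∑ u ∈ (Set.toFinite (G.neighborSet v)).toFinset, f u := by
  rw [← finsum_mem_coe_finset]
  rw [Set.Finite.coe_toFinset]

private lemma ws_dyn_mono_at (G : SimpleGraph V) (σ τ : V → ℤ) (s s' : ℕ) (w : V)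
    (h : ∀ u ∈ G.neighborSet w, dyn G σ s u ≤ dyn G τ s' u) :
    dyn G σ (s + 1) w ≤ dyn G τ (s' + 1) w := by
  rw [ws_dyn_succ, ws_dyn_succ, ws_finsum_nbr, ws_finsum_nbr]
  have hs : ∑ u ∈ (Set.toFinite (G.neighborSet w)).toFinset, dyn G σ s u
      ≤ ∑ u ∈ (Set.toFinite (G.neighborSet w)).toFinset, dyn G τ s' u :=
    Finset.sum_le_sum fun u hu => h u ((Set.Finite.mem_toFinset _).mp hu)
  split_ifs with h1 h2
  · exact le_refl _
  · exact absurd (lt_of_lt_of_le h1 hs) h2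
  · norm_num
  · exact le_refl _

private lemma ws_dyn_maj (G : SimpleGraph V) (σ : V → ℤ) (hσ : PM σ) (s : ℕ) {v a b : V}
    (hdeg : degree' G v = 3) (ha : G.Adj v a) (hb : G.Adj v b) (hab : a ≠ b)
    {ξv : ℤ} (hξ : ξv = 1 ∨ ξv = -1)
    (hfa : dyn G σ s a = ξv) (hfb : dyn G σ s b = ξv) :
    dyn G σ (s + 1) v = ξv := by
  have hf : ∀ u, dyn G σ s u = 1 ∨ dyn G σ s u = -1 := ws_PM_dyn G σ hσ s
  rw [ws_dyn_succ, ws_finsum_nbr]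
  set f : V → ℤ := dyn G σ s with hfdef
  set S := (Set.toFinite (G.neighborSet v)).toFinset with hS
  have hcard : S.card = 3 := by
    rw [← Set.ncard_eq_toFinset_card]; exact hdeg
  have haS : a ∈ S := (Set.Finite.mem_toFinset _).mpr ha
  have hbS : b ∈ S := (Set.Finite.mem_toFinset _).mpr hb
  have hsub : ({a, b} : Finset V) ⊆ S := by
    intro x hx
    rcases Finset.mem_insert.mp hx with h | h
    · subst h; exact haS
    · rw [Finset.mem_singleton] at h; subst h; exact hbS
  have hsd := Finset.sum_sdiff (f := f) hsub
  have hpair : ∑ u ∈ ({a, b} : Finset V), f u = f a + f b := Finset.sum_pair hab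
  have hcard2 : (S \ {a, b}).card = 1 := by
    rw [Finset.card_sdiff_of_subset hsub, Finset.card_pair hab, hcard]
  obtain ⟨c, hc⟩ := Finset.card_eq_one.mp hcard2
  have hsum : ∑ u ∈ S, f u = f c + (f a + f b) := by
    rw [← hsd, hc, Finset.sum_singleton, hpair]
  rcases hf c with h | h <;> rcases hξ with h' | h' <;>
    rw [hsum, hfa, hfb, h, h'] <;> norm_num

private lemma ws_deg_three (hdeg : degree' G v = 1 ∨ degree' G v = 3) {a b : V}
    (ha : G.Adj v a) (hb : G.Adj v b) (hab : a ≠ b) : degree' G v = 3 := by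
  rcases hdeg with h | h
  · exfalso
    obtain ⟨x, hx⟩ := Set.ncard_eq_one.mp h
    have ha' : a ∈ G.neighborSet v := ha
    have hb' : b ∈ G.neighborSet v := hb
    rw [hx, Set.mem_singleton_iff] at ha' hb'
    exact hab (ha'.trans hb'.symm)
  · exact h

end WSdyn
private lemma ws_pin {ξv x : ℤ} (hξ : ξv = 1 ∨ ξv = -1) (hx : x = 1 ∨ x = -1)
    (h : ξv * ξv ≤ ξv * x) : x = ξv := by
  rcases hξ with h1 | h1 <;> rcases hx with h2 | h2 <;> subst h1 <;> subst h2 <;>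
    first
    | rfl
    | (exfalso; norm_num at h)

private lemma ws_le_sq {ξv x : ℤ} (hξ : ξv = 1 ∨ ξv = -1) (hx : x = 1 ∨ x = -1) :
    ξv * x ≤ ξv * ξv := by
  rcases hξ with h1 | h1 <;> rcases hx with h2 | h2 <;> subst h1 <;> subst h2 <;> norm_num
/-- Let `P = v_0 v_1 … v_d` (`d` even and positive) be a non-monotone
path in a perfect binary tree (the subtrees of `v_0` and `v_d` are disjoint). If at time
`t` every even-indexed vertex of `P` has opinion `ξ ∈ {-1,1}` and both `v_0` and `v_d`
are weakly `t`-stable, then every even-indexed vertex of `P` is `t`-stable. -/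
theorem weak_stabilization [Fintype V] (G : SimpleGraph V) (R : V) (hgt : ℕ) (hh : 1 ≤ hgt)
    (hperf : IsPerfectKAry G R 2 hgt) (σ : V → ℤ) (hσ : PM σ)
    (t d : ℕ) (hd : 0 < d) (hde : Even d)
    (p : Fin (d + 1) → V) (hinj : Function.Injective p)
    (hadj : ∀ (i : ℕ) (h : i < d),
      G.Adj (p ⟨i, by omega⟩) (p ⟨i + 1, by omega⟩))
    (h0 : p 0 ≠ R) (hdd : p (Fin.last d) ≠ R)
    (hdisj : desc G R (p 0) ∩ desc G R (p (Fin.last d)) = ∅)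
    (ξv : ℤ) (hξv : ξv = 1 ∨ ξv = -1)
    (hop : ∀ i : Fin (d + 1), Even (i : ℕ) → dyn G σ t (p i) = ξv)
    (hw0 : WeaklyStable G R (dyn G σ) (p 0) t)
    (hwd : WeaklyStable G R (dyn G σ) (p (Fin.last d)) t) :
    ∀ i : Fin (d + 1), Even (i : ℕ) → Stable (dyn G σ) (p i) t := by
  classical
  obtain ⟨hT, hdeg13, hleaf, hdegR⟩ := hperf
  have hdmod : d % 2 = 0 := Nat.even_iff.mp hde
  have hd2 : 2 ≤ d := by omega
  set q : ℕ → V := fun i => if h : i ≤ d then p ⟨i, Nat.lt_succ_of_le h⟩ else p 0 with hqdef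
  have hqe : ∀ (i : ℕ) (hi : i ≤ d), q i = p ⟨i, by omega⟩ := by
    intro i hi
    rw [hqdef]
    exact dif_pos hi
  have hq : ∀ i : Fin (d + 1), q (i : ℕ) = p i := by
    intro i
    rw [hqe (i : ℕ) (Fin.is_le i), Fin.eta]
  have hq0 : q 0 = p 0 := by
    have := hq 0; simpa using this
  have hqd : q d = p (Fin.last d) := by
    have := hq (Fin.last d); simpa using this
  have hadjq : ∀ i, i < d → G.Adj (q i) (q (i + 1)) := by
    intro i h
    rw [hqe i (by omega), hqe (i + 1) (by omega)]
    exact hadj i h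
  have hinjq : ∀ i j, i ≤ d → j ≤ d → q i = q j → i = j := by
    intro i j hi hj h
    rw [hqe i hi, hqe j hj] at h
    simpa using congrArg Fin.val (hinj h)
  have hopq : ∀ i, i ≤ d → i % 2 = 0 → dyn G σ t (q i) = ξv := by
    intro i hi he
    rw [hqe i hi]
    exact hop ⟨i, by omega⟩ (Nat.even_iff.mpr he)
  rw [← hq0] at hw0
  rw [← hqd] at hwd
  rw [← hq0, ← hqd] at hdisj
  obtain ⟨σ₀, hPM0, hag0, hst0⟩ := hw0
  obtain ⟨σ₁, hPM1, hag1, hst1⟩ := hwd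
  have houtL : q d ∉ desc G R (q 0) := by
    intro h
    have : q d ∈ desc G R (q 0) ∩ desc G R (q d) := ⟨h, ws_mem_desc_self R (q d)⟩
    rw [hdisj] at this
    exact this
  have houtR : q 0 ∉ desc G R (q d) := by
    intro h
    have : q 0 ∈ desc G R (q 0) ∩ desc G R (q d) := ⟨ws_mem_desc_self R (q 0), h⟩
    rw [hdisj] at this
    exact this
  have hend0 : ∀ u, G.Adj u (q 0) → u ∉ desc G R (q 0) → u = q 1 :=
    ws_endpoint hT R hd2 q hinjq hadjq houtL
  have hendd : ∀ u, G.Adj u (q d) → u ∉ desc G R (q d) → u = q (d - 1) := by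
    have H := ws_endpoint hT R hd2 (fun i => q (d - i)) ?_ ?_ ?_
    · intro u h1 h2
      exact H u h1 h2
    · intro i j hi hj h
      have := hinjq (d - i) (d - j) (by omega) (by omega) h
      omega
    · intro i h
      have h2 := hadjq (d - (i + 1)) (by omega)
      rw [show d - (i + 1) + 1 = d - i from by omega] at h2
      exact h2.symm
    · show q (d - d) ∉ desc G R (q (d - 0))
      rw [Nat.sub_self, Nat.sub_zero]
      exact houtR
  have hPMdyn : ∀ n, PM (dyn G σ n) := ws_PM_dyn G σ hσ
  have hstable0 : ∀ s, s % 2 = 0 → dyn G σ₀ s (q 0) = ξv := by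
    have base : dyn G σ₀ 0 (q 0) = ξv := by
      show σ₀ (q 0) = ξv
      rw [hag0 (q 0) (ws_mem_desc_self R (q 0))]
      exact hopq 0 (by omega) (by omega)
    have key : ∀ k, dyn G σ₀ (2 * k) (q 0) = ξv := by
      intro k
      induction k with
      | zero => simpa using base
      | succ k ih =>
        have h2 := hst0 (2 * k) (by omega)
        rw [show 2 * (k + 1) = 2 * k + 2 from by ring, h2]
        exact ih
    intro s hs
    have := key (s / 2)
    rwa [show 2 * (s / 2) = s from by omega] at this
  have hstabled : ∀ s, s % 2 = 0 → dyn G σ₁ s (q d) = ξv := by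
    have base : dyn G σ₁ 0 (q d) = ξv := by
      show σ₁ (q d) = ξv
      rw [hag1 (q d) (ws_mem_desc_self R (q d))]
      exact hopq d (by omega) (by omega)
    have key : ∀ k, dyn G σ₁ (2 * k) (q d) = ξv := by
      intro k
      induction k with
      | zero => simpa using base
      | succ k ih =>
        have h2 := hst1 (2 * k) (by omega)
        rw [show 2 * (k + 1) = 2 * k + 2 from by ring, h2]
        exact ih
    intro s hs
    have := key (s / 2)
    rwa [show 2 * (s / 2) = s from by omega] at this
  -- the main parity induction
  have main : ∀ s,
      (∀ i, i ≤ d → (i + s) % 2 = 0 → dyn G σ (t + s) (q i) = ξv)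
      ∧ (∀ w ∈ desc G R (q 0), (G.dist (q 0) w + s) % 2 = 0 →
          ξv * dyn G σ₀ s w ≤ ξv * dyn G σ (t + s) w)
      ∧ (∀ w ∈ desc G R (q d), (G.dist (q d) w + s) % 2 = 0 →
          ξv * dyn G σ₁ s w ≤ ξv * dyn G σ (t + s) w) := by
    intro s
    induction s with
    | zero =>
      refine ⟨fun i hi hp => hopq i hi (by omega), ?_, ?_⟩
      · intro w hw _
        show ξv * dyn G σ₀ 0 w ≤ ξv * dyn G σ t w
        have : dyn G σ₀ 0 w = dyn G σ t w := hag0 w hw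
        rw [this]
      · intro w hw _
        show ξv * dyn G σ₁ 0 w ≤ ξv * dyn G σ t w
        have : dyn G σ₁ 0 w = dyn G σ t w := hag1 w hw
        rw [this]
    | succ s ih =>
      obtain ⟨ih1, ih2, ih3⟩ := ih
      have part2gen : ∀ (v₀ vnext : V) (τ : V → ℤ),
          PM τ →
          (∀ u, G.Adj u v₀ → u ∉ desc G R v₀ → u = vnext) →
          ((s + 1) % 2 = 0 → dyn G σ (t + s) vnext = ξv) →
          (∀ w ∈ desc G R v₀, (G.dist v₀ w + s) % 2 = 0 →
              ξv * dyn G τ s w ≤ ξv * dyn G σ (t + s) w) →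
          ∀ w ∈ desc G R v₀, (G.dist v₀ w + (s + 1)) % 2 = 0 →
              ξv * dyn G τ (s + 1) w ≤ ξv * dyn G σ (t + s + 1) w := by
        intro v₀ vnext τ hPMτ huniq hval ih2' w hw hpar
        have hcomp : ∀ u ∈ G.neighborSet w, ξv * dyn G τ s u ≤ ξv * dyn G σ (t + s) u := by
          intro u hu
          have hadjwu : G.Adj w u := hu
          by_cases hud : u ∈ desc G R v₀
          · apply ih2' u hud
            rcases ws_adj_dist_cases hT v₀ hadjwu.symm with hc | hc <;> omega
          · have hwv : w = v₀ := ws_adj_desc hT hw hadjwu.symm hud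
            subst hwv
            rw [SimpleGraph.dist_self] at hpar
            have hpar' : (s + 1) % 2 = 0 := by omega
            have hu1 : u = vnext := huniq u hadjwu.symm hud
            rw [hu1, hval hpar']
            exact ws_le_sq hξv (ws_PM_dyn G τ hPMτ s vnext)
        rcases hξv with h | h
        · rw [h] at hcomp ⊢
          simp only [one_mul] at hcomp ⊢
          exact ws_dyn_mono_at G τ σ s (t + s) w hcomp
        · rw [h] at hcomp ⊢
          have hcomp' : ∀ u ∈ G.neighborSet w, dyn G σ (t + s) u ≤ dyn G τ s u := by
            intro u hu
            have := hcomp u hu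
            linarith
          have := ws_dyn_mono_at G σ τ (t + s) s w hcomp'
          linarith
      have part2 := part2gen (q 0) (q 1) σ₀ hPM0 hend0
        (fun hp => ih1 1 (by omega) (by omega)) ih2
      have part3 := part2gen (q d) (q (d - 1)) σ₁ hPM1 hendd
        (fun hp => ih1 (d - 1) (by omega) (by omega)) ih3
      refine ⟨?_, part2, part3⟩
      intro i hi hpar
      show dyn G σ (t + s + 1) (q i) = ξv
      by_cases hi0 : i = 0
      · subst hi0
        have hs1 : (s + 1) % 2 = 0 := by omega
        have hp2 := part2 (q 0) (ws_mem_desc_self R (q 0))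
          (by rw [SimpleGraph.dist_self]; omega)
        rw [hstable0 (s + 1) hs1] at hp2
        exact ws_pin hξv (hPMdyn (t + s + 1) (q 0)) hp2
      · by_cases hid : i = d
        · rw [hid]
          have hs1 : (s + 1) % 2 = 0 := by omega
          have hp3 := part3 (q d) (ws_mem_desc_self R (q d))
            (by rw [SimpleGraph.dist_self]; omega)
          rw [hstabled (s + 1) hs1] at hp3
          exact ws_pin hξv (hPMdyn (t + s + 1) (q d)) hp3
        · have hii : 0 < i ∧ i < d := by omega
          have hneV : q (i - 1) ≠ q (i + 1) := by
            intro h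
            have := hinjq (i - 1) (i + 1) (by omega) (by omega) h
            omega
          have hadja : G.Adj (q i) (q (i - 1)) := by
            have h2 := hadjq (i - 1) (by omega)
            rw [show i - 1 + 1 = i from by omega] at h2
            exact h2.symm
          have hadjb : G.Adj (q i) (q (i + 1)) := hadjq i (by omega)
          have hdeg3 : degree' G (q i) = 3 := ws_deg_three (hdeg13 (q i)) hadja hadjb hneV
          have hva : dyn G σ (t + s) (q (i - 1)) = ξv := ih1 (i - 1) (by omega) (by omega)
          have hvb : dyn G σ (t + s) (q (i + 1)) = ξv := ih1 (i + 1) (by omega) (by omega)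
          exact ws_dyn_maj G σ hσ (t + s) hdeg3 hadja hadjb hneV hξv hva hvb
  -- conclude
  intro i hieven s hst hspar
  have hie : (i : ℕ) % 2 = 0 := Nat.even_iff.mp hieven
  have hile : (i : ℕ) ≤ d := Fin.is_le i
  obtain ⟨k, hk⟩ : ∃ k, s = t + k := ⟨s - t, by omega⟩
  have hkpar : ((i : ℕ) + k) % 2 = 0 := by omega
  have h1 := (main k).1 (i : ℕ) hile hkpar
  have h2 := (main (k + 2)).1 (i : ℕ) hile (by omega)
  rw [← hq i]
  subst hk
  show dyn G σ (t + (k + 2)) (q (i : ℕ)) = dyn G σ (t + k) (q (i : ℕ))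
  rw [h1, h2]
end

section
/- Let P(x) = (1/4 + x²/4)² + (1 − (1−x²)/4)² · ((1/2 + x/2)⁴ − (1/4 + x²/4)²). Then the smallest positive real solution q of x = P(x) satisfies 1/16 < q < 3/40. -/
/-- The polynomial from the recursive analysis of weak 0-stability on the perfect binary
tree. -/
noncomputable def Ppoly (x : ℝ) : ℝ :=
  (1 / 4 + x ^ 2 / 4) ^ 2 +
    (1 - (1 - x ^ 2) / 4) ^ 2 * ((1 / 2 + x / 2) ^ 4 - (1 / 4 + x ^ 2 / 4) ^ 2)

lemma Ppoly_gt (x : ℝ) (hx : 0 < x) : 1 / 16 < Ppoly x := by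
  unfold Ppoly
  nlinarith [pow_pos hx 2, pow_pos hx 3, pow_pos hx 4, pow_pos hx 5, pow_pos hx 6,
    pow_pos hx 7, pow_pos hx 8, sq_nonneg x]

lemma Ppoly_cont : Continuous Ppoly := by
  unfold Ppoly; continuity

/-- The smallest positive real solution `q` of `x = P(x)` satisfies
`1/16 < q < 3/40`. -/
theorem smallest_fixed_point :
    ∃ q : ℝ, IsLeast {x : ℝ | 0 < x ∧ Ppoly x = x} q ∧ 1 / 16 < q ∧ q < 3 / 40 := by
  set f : ℝ → ℝ := fun x => Ppoly x - x with hf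
  have hcont : ContinuousOn f (Set.Icc (1/16 : ℝ) (3/40)) :=
    (Ppoly_cont.sub continuous_id).continuousOn
  have hfa : 0 < f (1/16) := by
    have := Ppoly_gt (1/16) (by norm_num)
    simp only [hf]; linarith
  have hfb : f (3/40) < 0 := by
    simp only [hf]
    unfold Ppoly
    norm_num
  have hmem : (0:ℝ) ∈ Set.Icc (f (3/40)) (f (1/16)) := ⟨le_of_lt hfb, le_of_lt hfa⟩
  obtain ⟨c, hcmem, hfc⟩ := intermediate_value_Icc' (by norm_num : (1/16:ℝ) ≤ 3/40) hcont hmem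
  have hPc : Ppoly c = c := by
    have : Ppoly c - c = 0 := hfc
    linarith
  have hclt : c < 3/40 := by
    rcases lt_or_eq_of_le hcmem.2 with h | h
    · exact h
    · exfalso; rw [h] at hfc; exact absurd hfc hfb.ne
  -- the closed set T
  set T : Set ℝ := {x : ℝ | 1/16 ≤ x ∧ Ppoly x = x} with hT
  have hTclosed : IsClosed T := by
    have : T = (Set.Ici (1/16 : ℝ)) ∩ {x | Ppoly x - x = 0} := by
      ext x; simp [hT, Set.mem_setOf_eq, sub_eq_zero]
    rw [this]
    exact isClosed_Ici.inter (isClosed_eq (Ppoly_cont.sub continuous_id) continuous_const)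
  have hTne : T.Nonempty := ⟨c, hcmem.1, hPc⟩
  have hTbdd : BddBelow T := ⟨1/16, fun x hx => hx.1⟩
  set q := sInf T with hq
  have hqT : q ∈ T := hTclosed.csInf_mem hTne hTbdd
  have hqpos : 0 < q := lt_of_lt_of_le (by norm_num) hqT.1
  have hST : {x : ℝ | 0 < x ∧ Ppoly x = x} = T := by
    ext x
    constructor
    · rintro ⟨hx, hPx⟩
      exact ⟨le_of_lt (hPx ▸ Ppoly_gt x hx), hPx⟩
    · rintro ⟨hx, hPx⟩
      exact ⟨lt_of_lt_of_le (by norm_num) hx, hPx⟩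
  refine ⟨q, ⟨?_, ?_⟩, ?_, ?_⟩
  · rw [hST]; exact hqT
  · intro y hy
    rw [hST] at hy
    exact csInf_le hTbdd hy
  · calc (1/16 : ℝ) < Ppoly q := Ppoly_gt q hqpos
      _ = q := hqT.2
  · exact lt_of_le_of_lt (csInf_le hTbdd ⟨hcmem.1, hPc⟩) hclt
end
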